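/- Let y1, y2, u be real numbers in [0,1], and let v1, v2 be in {0,1}, satisfying y1 ≤ v1, y2 ≤ v2, y1 + y2 ≤ u, u ≤ y1 + 10·(1 − v1), and u ≤ y2 + 10·(1 − v2). Then y1 = 0 or y2 = 0. -/
import Mathlib


theorem compartment_no_mixing
    (y1 y2 u v1 v2 : ℝ)
    (hy1 : y1 ∈ Set.Icc (0:ℝ) 1) (hy2 : y2 ∈ Set.Icc (0:ℝ) 1)
    (hu : u ∈ Set.Icc (0:ℝ) 1)
    (hv1 : v1 = 0 ∨ v1 = 1) (hv2 : v2 = 0 ∨ v2 = 1)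
    (h1 : y1 ≤ v1) (h2 : y2 ≤ v2)
    (h3 : y1 + y2 ≤ u)
    (h4 : u ≤ y1 + 10 * (1 - v1))
    (h5 : u ≤ y2 + 10 * (1 - v2)) :
    y1 = 0 ∨ y2 = 0 := by
  rcases hv1 with h | h
  · left; subst h; linarith [hy1.1]
  · rcases hv2 with h' | h'
    · right; subst h'; linarith [hy2.1]
    · right; subst h; subst h'; linarith [hy2.1]
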